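/- arXiv:2602.09995 — 4 statements merged into one kernel-verified Lean document; each statement's English description precedes it below -/
import Mathlib

section
/- Let A and B be C*-algebras and let (a_i)_{i∈I} be a family of elements of A that generates A as a C*-algebra. Equip the set E of injective star-algebra homomorphisms from A to B with the topology of pointwise norm convergence, i.e., the topology induced from the product topology on the function space A → B (where B carries its norm topology) via the map sending a homomorphism to its underlying function. Then the map E → B^I sending π to the tuple (π(a_i))_{i∈I}, where B^I carries the product topology, is a topological embedding onto its image; equivalently, it is injective and the topology on E is induced by this map (it is an inducing map). -/
/-!
Star homomorphisms between C⋆-algebras are contractive, so the family of all of them is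
equicontinuous. For an equicontinuous family, the points at which evaluation is continuous in
the parameter form a closed set; for star homomorphisms it is moreover a star subalgebra. If it
contains the generators, it is therefore everything, so convergence on the generators already
gives pointwise convergence everywhere.
-/

open Topology

theorem Equicontinuous.isClosed_setOf_continuous_apply {ι X α : Type*} [TopologicalSpace ι]
    [TopologicalSpace X] [UniformSpace α] {F : ι → X → α} (hF : Equicontinuous F) :
    IsClosed {x | Continuous fun i => F i x} := by
  simp only [continuous_iff_continuousAt, Set.ofPred_forall]
  exact isClosed_iInter fun i => hF.isClosed_setOfPred_tendsto (hF.continuous i)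

namespace StarSubalgebra

variable {R A B X : Type*} [CommSemiring R] [StarRing R] [Semiring A] [StarRing A] [Algebra R A]
  [StarModule R A] [Semiring B] [StarRing B] [Algebra R B] [TopologicalSpace B]
  [IsTopologicalSemiring B] [ContinuousStar B] [TopologicalSpace X]

def continuousApply (φ : X → A →⋆ₐ[R] B) : StarSubalgebra R A where
  carrier := {a | Continuous fun x => φ x a}
  mul_mem' {a b} ha hb := by simp only [Set.mem_ofPred_eq, map_mul]; exact ha.mul hb
  add_mem' {a b} ha hb := by simp only [Set.mem_ofPred_eq, map_add]; exact ha.add hb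
  algebraMap_mem' r := by
    simp only [Set.mem_ofPred_eq, AlgHomClass.commutes]; exact continuous_const
  star_mem' {a} ha := by simp only [Set.mem_ofPred_eq, map_star]; exact ha.star

end StarSubalgebra

theorem Equicontinuous.continuous_starAlgHom_apply {R A B X : Type*} [CommSemiring R] [StarRing R]
    [Semiring A] [StarRing A] [Algebra R A] [StarModule R A] [TopologicalSpace A]
    [IsSemitopologicalSemiring A] [ContinuousStar A] [Semiring B] [StarRing B] [Algebra R B]
    [UniformSpace B] [IsTopologicalSemiring B] [ContinuousStar B] [TopologicalSpace X]
    {φ : X → A →⋆ₐ[R] B} (hφ : Equicontinuous fun x => ⇑(φ x)) {s : Set A}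
    (hs : (StarAlgebra.adjoin R s).topologicalClosure = ⊤)
    (h : ∀ a ∈ s, Continuous fun x => φ x a) (a : A) : Continuous fun x => φ x a := by
  have hle : (StarAlgebra.adjoin R s).topologicalClosure ≤ StarSubalgebra.continuousApply φ :=
    StarSubalgebra.topologicalClosure_minimal (StarAlgebra.adjoin_le h)
      hφ.isClosed_setOf_continuous_apply
  exact hle (hs ▸ StarSubalgebra.mem_top)

theorem StarAlgHom.equicontinuous_coe {A B : Type*} [CStarAlgebra A] [CStarAlgebra B] :
    Equicontinuous fun φ : A →⋆ₐ[ℂ] B => ⇑φ :=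
  (LipschitzWith.uniformEquicontinuous _ 1 fun φ =>
    AddMonoidHomClass.lipschitz_of_bound_nnnorm φ 1
      (by simpa only [one_mul] using NonUnitalStarAlgHom.nnnorm_apply_le φ)).equicontinuous

/-- Let A and B be C*-algebras and (a_i)_{i∈I} a family generating A as a C*-algebra. Equip
the set E of injective star-algebra homomorphisms A → B with the topology of pointwise norm
convergence (induced from the product topology on A → B, B with its norm topology). Then the
map E → B^I, π ↦ (π(a_i))_{i∈I}, is a topological embedding (injective and inducing). -/
theorem stmt1 {A B : Type*} [CStarAlgebra A] [CStarAlgebra B] {I : Type*} (a : I → A)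
    (hgen : (StarAlgebra.adjoin ℂ (Set.range a)).topologicalClosure = ⊤) :
    letI : TopologicalSpace {π : A →⋆ₐ[ℂ] B // Function.Injective π} :=
      TopologicalSpace.induced (fun p => (⇑p.1 : A → B)) Pi.topologicalSpace
    Topology.IsEmbedding fun (p : {π : A →⋆ₐ[ℂ] B // Function.Injective π}) (i : I) => p.1 (a i) := by
  let E := {π : A →⋆ₐ[ℂ] B // Function.Injective π}
  let : TopologicalSpace E := TopologicalSpace.induced (fun p => (⇑p.1 : A → B)) inferInstance
  let g : E → I → B := fun p i => p.1 (a i)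
  have hcoe : IsEmbedding fun p : E => ⇑p.1 :=
    ⟨.induced _, DFunLike.coe_injective.comp Subtype.val_injective⟩
  have hg : Continuous g :=
    continuous_pi fun i => (continuous_apply (a i)).comp hcoe.continuous
  have hind : IsInducing g := by
    refine ⟨le_antisymm (continuous_iff_le_induced.1 hg) ?_⟩
    let : TopologicalSpace E := TopologicalSpace.induced g inferInstance
    have hgen_cont : ∀ i, Continuous fun p : E => p.1 (a i) := fun i =>
      (continuous_apply i).comp (continuous_induced_dom : Continuous g)
    have hcoe_cont : Continuous fun p : E => ⇑p.1 :=
      continuous_pi <| (StarAlgHom.equicontinuous_coe.comp Subtype.val).continuous_starAlgHom_apply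
        hgen (Set.forall_mem_range.2 hgen_cont)
    exact continuous_iff_le_induced.1 hcoe_cont
  have : T0Space E := hcoe.t0Space
  exact ⟨hind, hind.injective⟩
end

section
/- Let Y be a topological space and X ⊆ Y a subset (with the subspace topology). Suppose that for every compact subset K ⊆ Y there exists a continuous map φ_K : K × [0,1] → Y such that (i) φ_K(p, 0) = p for all p ∈ K, (ii) φ_K(p, 1) ∈ X for all p ∈ K, and (iii) φ_K(p, t) ∈ X for all p ∈ K ∩ X and all t ∈ [0,1]. Then for every k ≥ 0 and every continuous map f : S^k → X, if the composition of f with the inclusion X ⊆ Y is homotopic in Y to a constant map, then f is homotopic to a constant map through maps S^k → X. -/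
/-- Suppose for every compact K ⊆ Y there is a homotopy φ_K : K × [0,1] → Y starting at the
inclusion, ending in X, and staying in X on K ∩ X. If a continuous map f : S^k → X becomes
homotopic to a constant map after composing with the inclusion X ⊆ Y, then f is homotopic to
a constant map through maps S^k → X. -/
theorem stmt3 {Y : Type*} [TopologicalSpace Y] (X : Set Y)
    (hyp : ∀ K : Set Y, IsCompact K → ∃ φ : C(K × unitInterval, Y),
      (∀ p : K, φ (p, 0) = (p : Y)) ∧ (∀ p : K, φ (p, 1) ∈ X) ∧
      (∀ p : K, (p : Y) ∈ X → ∀ t : unitInterval, φ (p, t) ∈ X))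
    (k : ℕ) (f : C(Metric.sphere (0 : EuclideanSpace ℝ (Fin (k + 1))) 1, X))
    (hf : ∃ y : Y, ContinuousMap.Homotopic
      ((⟨Subtype.val, continuous_subtype_val⟩ : C(X, Y)).comp f)
      (ContinuousMap.const _ y)) :
    ∃ x : X, ContinuousMap.Homotopic f (ContinuousMap.const _ x) := by
  obtain ⟨y, ⟨H⟩⟩ := hf
  let S := Metric.sphere (0 : EuclideanSpace ℝ (Fin (k + 1))) 1
  have hK : IsCompact (Set.range H) := isCompact_range H.continuous
  obtain ⟨φ, hφ0, hφ1, hφX⟩ := hyp _ hK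
  have he : Continuous fun p : S × unitInterval => (⟨H (p.2, p.1), Set.mem_range_self _⟩ : Set.range H) :=
    (H.continuous.comp (continuous_snd.prodMk continuous_fst)).subtype_mk _
  let e : C(S × unitInterval, Set.range H) := ⟨_, he⟩
  have hfX : ∀ s : S, (e (s, 0) : Y) ∈ X := by
    intro s
    have h := H.map_zero_left s
    simp only [ContinuousMap.comp_apply, ContinuousMap.coe_mk] at h
    simp only [e, ContinuousMap.coe_mk]
    rw [show (H (0, s) : Y) = ((f s : Y)) from h]
    exact (f s).2
  -- f₁ : deformation of f into X
  let f₁ : C(S, X) := ⟨fun s => ⟨φ (e (s, 0), 1), hφ1 _⟩,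
    (φ.continuous.comp ((he.comp (continuous_id.prodMk continuous_const)).prodMk
      continuous_const)).subtype_mk _⟩
  -- first homotopy: f to f₁, within X
  let G₁ : ContinuousMap.Homotopy f f₁ :=
    { toFun := fun p => ⟨φ (e (p.2, 0), p.1), hφX _ (hfX p.2) p.1⟩
      continuous_toFun := by
        refine Continuous.subtype_mk ?_ _
        exact φ.continuous.comp ((he.comp ((continuous_snd).prodMk continuous_const)).prodMk
          continuous_fst)
      map_zero_left := by
        intro s
        apply Subtype.ext
        simp only [ContinuousMap.coe_mk]
        have h0 := hφ0 (e (s, 0))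
        rw [h0]
        have h := H.map_zero_left s
        simp only [ContinuousMap.comp_apply, ContinuousMap.coe_mk] at h
        exact h
      map_one_left := fun s => rfl }
  -- the point y is in the range of H
  have hs0 : (EuclideanSpace.single (0 : Fin (k+1)) (1:ℝ)) ∈ S := by
    simp [S, EuclideanSpace.norm_single]
  have hy : y ∈ Set.range H := ⟨(1, ⟨_, hs0⟩), H.map_one_left _⟩
  let x : X := ⟨φ (⟨y, hy⟩, 1), hφ1 _⟩
  -- second homotopy: f₁ to const x, within X
  let G₂ : ContinuousMap.Homotopy f₁ (ContinuousMap.const S x) :=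
    { toFun := fun p => ⟨φ (e (p.2, p.1), 1), hφ1 _⟩
      continuous_toFun :=
        (φ.continuous.comp ((he.comp (continuous_snd.prodMk continuous_fst)).prodMk
          continuous_const)).subtype_mk _
      map_zero_left := fun s => rfl
      map_one_left := by
        intro s
        apply Subtype.ext
        simp only [ContinuousMap.coe_mk, ContinuousMap.const_apply, x]
        congr 2
        have h := H.map_one_left s
        simp only [ContinuousMap.const_apply] at h
        exact Subtype.ext h }
  exact ⟨x, ⟨G₁.trans G₂⟩⟩
end

section
/- Let Y be a topological space and X ⊆ Y a subset (with the subspace topology). Suppose that for every compact subset K ⊆ Y there exists a continuous map φ_K : K × [0,1] → Y such that (i) φ_K(p, 0) = p for all p ∈ K, (ii) φ_K(p, 1) ∈ X for all p ∈ K, and (iii) φ_K(p, t) ∈ X for all p ∈ K ∩ X and all t ∈ [0,1]. Then for every k ≥ 0, every continuous map f : S^k → Y is homotopic in Y to a continuous map g : S^k → Y whose range is contained in X; moreover, if f(b) ∈ X for a given base point b ∈ S^k, then there is a continuous path inside X from f(b) to g(b). -/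
/-- Suppose for every compact K ⊆ Y there is a homotopy φ_K : K × [0,1] → Y starting at the
inclusion, ending in X, and staying in X on K ∩ X. Then every continuous map f : S^k → Y is
homotopic (in Y) to a continuous map g with range contained in X; moreover, for any base
point b with f(b) ∈ X, there is a continuous path inside X from f(b) to g(b). -/
theorem stmt5 {Y : Type*} [TopologicalSpace Y] (X : Set Y)
    (hyp : ∀ K : Set Y, IsCompact K → ∃ φ : C(K × unitInterval, Y),
      (∀ p : K, φ (p, 0) = (p : Y)) ∧ (∀ p : K, φ (p, 1) ∈ X) ∧
      (∀ p : K, (p : Y) ∈ X → ∀ t : unitInterval, φ (p, t) ∈ X))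
    (k : ℕ) (f : C(Metric.sphere (0 : EuclideanSpace ℝ (Fin (k + 1))) 1, Y)) :
    ∃ g : C(Metric.sphere (0 : EuclideanSpace ℝ (Fin (k + 1))) 1, Y),
      ContinuousMap.Homotopic f g ∧ Set.range g ⊆ X ∧
      ∀ b, f b ∈ X → ∃ γ : C(unitInterval, Y),
        γ 0 = f b ∧ γ 1 = g b ∧ ∀ t : unitInterval, γ t ∈ X := by
  obtain ⟨φ, h0, h1, hX⟩ := hyp (Set.range f) (isCompact_range f.continuous)
  have hfm : ∀ x, f x ∈ Set.range f := fun x => Set.mem_range_self x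
  have hc : Continuous fun x : Metric.sphere (0 : EuclideanSpace ℝ (Fin (k + 1))) 1 =>
      (⟨f x, hfm x⟩ : Set.range f) := Continuous.subtype_mk f.continuous _
  refine ⟨⟨fun x => φ (⟨f x, hfm x⟩, 1), φ.continuous.comp (hc.prodMk continuous_const)⟩,
    ?_, ?_, ?_⟩
  · exact ⟨{ toFun := fun p => φ (⟨f p.2, hfm p.2⟩, p.1)
             continuous_toFun := φ.continuous.comp
               ((hc.comp continuous_snd).prodMk continuous_fst)
             map_zero_left := fun x => h0 _
             map_one_left := fun x => rfl }⟩
  · rintro y ⟨x, rfl⟩; exact h1 _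
  · intro b hb
    exact ⟨⟨fun t => φ (⟨f b, hfm b⟩, t),
        φ.continuous.comp (continuous_const.prodMk continuous_id)⟩,
      h0 _, rfl, fun t => hX _ hb t⟩
end

section
/- Let Y be a topological space and X ⊆ Y a subset (with the subspace topology). Suppose that for every compact subset K ⊆ Y there exists a continuous map φ_K : K × [0,1] → Y such that (i) φ_K(p, 0) = p for all p ∈ K, (ii) φ_K(p, 1) ∈ X for all p ∈ K, and (iii) φ_K(p, t) ∈ X for all p ∈ K ∩ X and all t ∈ [0,1]. Then the inclusion map X → Y is a weak homotopy equivalence: it induces a bijection between the set of path components of X and the set of path components of Y, and for every base point x ∈ X and every n ≥ 1 it induces a group isomorphism from the n-th homotopy group π_n(X, x) to π_n(Y, x). -/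
open scoped Topology.Homotopy

/-- The map on path components (zeroth homotopy) induced by the inclusion `X ⊆ Y`. -/
def zerothHomotopyInduced {Y : Type*} [TopologicalSpace Y] (X : Set Y) :
    ZerothHomotopy X → ZerothHomotopy Y :=
  Quotient.map (fun x => (x : Y))
    (fun _ _ h => ⟨h.somePath.map continuous_subtype_val⟩)

/-- Pushforward of a generalized loop along a continuous map. -/
def genLoopInduced {Z W : Type*} [TopologicalSpace Z] [TopologicalSpace W] {N : Type*}
    (φ : C(Z, W)) {z : Z} (p : GenLoop N Z z) : GenLoop N W (φ z) :=
  ⟨φ.comp p.1, fun y hy => congrArg φ (p.2 y hy)⟩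

/-- The map on `n`-th homotopy groups induced by the inclusion `X ⊆ Y` at a base point
`x ∈ X`, given by post-composition of (generalized) loops with the inclusion. -/
def homotopyGroupInduced {Y : Type*} [TopologicalSpace Y] (X : Set Y) (n : ℕ) (x : X) :
    HomotopyGroup (Fin n) X x → HomotopyGroup (Fin n) Y (x : Y) :=
  Quotient.map (genLoopInduced ⟨Subtype.val, continuous_subtype_val⟩)
    (fun _ _ h =>
      h.map fun H => H.compContinuousMap ⟨Subtype.val, continuous_subtype_val⟩)

/-!
Let `f` map a cube, a cylinder over a cube, or an interval to `Y`, sending the boundary into `X`,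
and let `φ` deform its compact image. Precompose `f` with a self-map `r` that blows the concentric
half-size cube up to the whole cube and squeezes the collar around it onto the boundary (`r` is
homotopic to the identity rel boundary), and at each point `z` run `φ` for time `s z`, where `s`
is `1` on the inner cube and `0` on the boundary. On the collar `f (r z)` lies in `X`, where `φ`
never leaves `X`, and on the inner cube `φ` runs to the end; so the result maps into `X` and agrees
with `f ∘ r` on the boundary. For spheres this gives surjectivity on homotopy groups, for
homotopies between spheres, and for paths, injectivity.
-/

open scoped Topology

open Set unitInterval ContinuousMap

section Collapse

variable {Z : Type*}

structure IsCollarCollapse (A : Set Z) (r : Z → Z) (s : Z → I) : Prop where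
  mem_of_lt_one : ∀ z, s z < 1 → r z ∈ A
  eq_zero : ∀ z ∈ A, s z = 0

namespace IsCollarCollapse

variable {A : Set Z} {r : Z → Z} {s : Z → I}

theorem eq_one_of_notMem (h : IsCollarCollapse A r s) {z : Z} (hz : r z ∉ A) : s z = 1 :=
  le_one'.eq_or_lt.resolve_right fun hlt => hz (h.mem_of_lt_one z hlt)

theorem prod {Z' : Type*} {A' : Set Z'} {r' : Z' → Z'} {s' : Z' → I}
    (h : IsCollarCollapse A r s) (h' : IsCollarCollapse A' r' s') :
    IsCollarCollapse {z | z.1 ∈ A ∨ z.2 ∈ A'} (Prod.map r r') fun z => s z.1 * s' z.2 where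
  mem_of_lt_one z hz := by
    by_contra hA
    rw [mem_ofPred_eq, not_or] at hA
    rw [h.eq_one_of_notMem hA.1, h'.eq_one_of_notMem hA.2, mul_one] at hz
    exact hz.false
  eq_zero z hz := by
    rcases hz with hz | hz
    · rw [h.eq_zero _ hz, zero_mul]
    · rw [h'.eq_zero _ hz, mul_zero]

theorem pi {ι : Type*} [Fintype ι] (h : IsCollarCollapse A r s) :
    IsCollarCollapse {y : ι → Z | ∃ i, y i ∈ A} (fun y i => r (y i))
      fun y => ∏ i, s (y i) where
  mem_of_lt_one y hy := by
    by_contra hA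
    rw [Finset.prod_eq_one fun i _ => h.eq_one_of_notMem fun hi => hA ⟨i, hi⟩] at hy
    exact hy.false
  eq_zero y := fun ⟨i, hi⟩ => Finset.prod_eq_zero (Finset.mem_univ i) (h.eq_zero _ hi)

end IsCollarCollapse

end Collapse

namespace unitInterval

-- `stretch 0 = id`, each `stretch t` fixes `0` and `1`, and `stretch 1` maps `[1/4, 3/4]` onto `I`.
noncomputable def stretch (t u : I) : I := projIcc 0 1 zero_le_one ((1 + t) * u - t / 2)

@[fun_prop]
theorem _root_.Continuous.stretch {α : Type*} [TopologicalSpace α] {f g : α → I}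
    (hf : Continuous f) (hg : Continuous g) : Continuous fun a => stretch (f a) (g a) :=
  continuous_projIcc.comp (by fun_prop)

@[simp]
theorem stretch_zero_left (u : I) : stretch 0 u = u := by
  simp [stretch]

@[simp]
theorem stretch_zero_right (t : I) : stretch t 0 = 0 :=
  projIcc_of_le_left _ (by simp; linarith [nonneg t])

@[simp]
theorem stretch_one_right (t : I) : stretch t 1 = 1 :=
  projIcc_of_right_le _ (by simp; linarith [nonneg t])

noncomputable def plateau (u : I) : I := projIcc 0 1 zero_le_one (4 * min (u : ℝ) (1 - u))

@[fun_prop]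
theorem continuous_plateau : Continuous plateau :=
  continuous_projIcc.comp (by fun_prop)

theorem isCollarCollapse_stretch_one_plateau : IsCollarCollapse {0, 1} (stretch 1) plateau where
  mem_of_lt_one u hu := by
    have hmin : 4 * min (u : ℝ) (1 - u) < 1 := by
      by_contra! h
      exact hu.ne (projIcc_of_right_le _ h)
    rcases min_lt_iff.1 (by linarith : min (u : ℝ) (1 - u) < 1 / 4) with h | h
    · exact Or.inl (projIcc_of_le_left _ (by simp; linarith))
    · exact Or.inr (projIcc_of_right_le _ (by simp; linarith))
  eq_zero u hu := by
    rcases hu with rfl | rfl <;> exact projIcc_of_le_left _ (by simp)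

end unitInterval

namespace Cube

variable {N : Type*}

noncomputable def stretch (t : I) : C(I^N, I^N) :=
  ⟨fun y i => unitInterval.stretch t (y i), by fun_prop⟩

theorem stretch_mem_boundary (t : I) {y : I^N} (hy : y ∈ boundary N) :
    stretch t y ∈ boundary N := by
  obtain ⟨i, hi | hi⟩ := hy
  · exact ⟨i, Or.inl (by simp [stretch, hi])⟩
  · exact ⟨i, Or.inr (by simp [stretch, hi])⟩

theorem isCollarCollapse_stretch_one_plateau [Fintype N] :
    IsCollarCollapse (boundary N) (stretch 1) fun y => ∏ i, plateau (y i) :=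
  unitInterval.isCollarCollapse_stretch_one_plateau.pi

end Cube

theorem GenLoop.homotopicRel_comp_stretch {N Z : Type*} [TopologicalSpace Z] {z : Z}
    (p : Ω^ N Z z) : p.1.HomotopicRel (p.1.comp (Cube.stretch 1)) (Cube.boundary N) :=
  ⟨{ toFun q := p fun i => stretch q.1 (q.2 i)
     continuous_toFun := by fun_prop
     map_zero_left y := by simp
     map_one_left y := rfl
     prop' t y hy := (GenLoop.boundary p _ (Cube.stretch_mem_boundary t hy)).trans
       (GenLoop.boundary p y hy).symm }⟩

@[simp]
theorem genLoopInduced_apply {Z W N : Type*} [TopologicalSpace Z] [TopologicalSpace W]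
    (φ : C(Z, W)) {z : Z} (p : Ω^ N Z z) (y : I^N) :
    (genLoopInduced φ p : C(I^N, W)) y = φ (p y) :=
  rfl

theorem genLoopInduced_transAt {Z W N : Type*} [TopologicalSpace Z] [TopologicalSpace W]
    [DecidableEq N] (φ : C(Z, W)) {z : Z} (i : N) (p q : Ω^ N Z z) :
    genLoopInduced φ (GenLoop.transAt i p q) =
      GenLoop.transAt i (genLoopInduced φ p) (genLoopInduced φ q) := by
  ext y
  simp only [GenLoop.transAt, GenLoop.coe_copy]
  exact apply_ite φ _ _ _

theorem homotopyGroupInduced_mul {Y : Type*} [TopologicalSpace Y] (X : Set Y) (n : ℕ) (x : X)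
    [Nonempty (Fin n)] (a b : HomotopyGroup (Fin n) X x) :
    homotopyGroupInduced X n x (a * b) =
      homotopyGroupInduced X n x a * homotopyGroupInduced X n x b := by
  induction a, b using Quotient.inductionOn₂ with | _ p q => ?_
  let i : Fin n := Classical.arbitrary _
  exact (congrArg _ (HomotopyGroup.mul_spec (i := i))).trans <|
    (congrArg (Quotient.mk _)
      (genLoopInduced_transAt ⟨Subtype.val, continuous_subtype_val⟩ i q p)).trans
        (HomotopyGroup.mul_spec (i := i)).symm

def CompactsDeformInto {Y : Type*} [TopologicalSpace Y] (X : Set Y) : Prop :=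
  ∀ K : Set Y, IsCompact K → ∃ φ : C(K × I, Y),
    (∀ p : K, φ (p, 0) = (p : Y)) ∧ (∀ p : K, φ (p, 1) ∈ X) ∧
    (∀ p : K, (p : Y) ∈ X → ∀ t : I, φ (p, t) ∈ X)

namespace CompactsDeformInto

variable {Y : Type*} [TopologicalSpace Y] {X : Set Y}

theorem exists_deformation {Z : Type*} [TopologicalSpace Z] [CompactSpace Z]
    (hX : CompactsDeformInto X) (F : C(Z, Y)) :
    ∃ Φ : C(I × Z, Y), (∀ z, Φ (0, z) = F z) ∧ (∀ z, Φ (1, z) ∈ X) ∧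
      ∀ z, F z ∈ X → ∀ t, Φ (t, z) ∈ X := by
  obtain ⟨φ, h0, h1, hφX⟩ := hX (range F) (isCompact_range F.continuous)
  refine ⟨⟨fun q => φ (rangeFactorization F q.2, q.1), by fun_prop⟩, fun z => h0 _,
    fun z => h1 _, fun z hz t => hφX _ hz t⟩

theorem exists_homotopicRel_comp {Z : Type*} [TopologicalSpace Z] [CompactSpace Z]
    (hX : CompactsDeformInto X) {A : Set Z} (r : C(Z, Z)) (s : C(Z, I))
    (hrs : IsCollarCollapse A r s) (F : C(Z, Y)) (hF : MapsTo F A X) :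
    ∃ G : C(Z, X),
      (F.comp r).HomotopicRel ((⟨Subtype.val, continuous_subtype_val⟩ : C(X, Y)).comp G) A := by
  obtain ⟨Φ, hΦ0, hΦ1, hΦX⟩ := hX.exists_deformation F
  -- Where `s z < 1`, the deformation starts at `F (r z) ∈ F '' A ⊆ X` and so stays in `X`.
  have hmem z : Φ (s z, r z) ∈ X := by
    rcases (le_one' : s z ≤ 1).lt_or_eq with h | h
    · exact hΦX _ (hF (hrs.mem_of_lt_one z h)) _
    · rw [h]; exact hΦ1 _
  refine ⟨⟨fun z => ⟨Φ (s z, r z), hmem z⟩, by fun_prop⟩, ⟨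
    { toFun q := Φ (q.1 * s q.2, r q.2)
      continuous_toFun := by fun_prop
      map_zero_left z := by simp [hΦ0]
      map_one_left z := by simp
      prop' t z hz := by simp [hrs.eq_zero z hz, hΦ0] }⟩⟩

theorem exists_mem_joined (hX : CompactsDeformInto X) (y : Y) : ∃ x ∈ X, Joined y x := by
  obtain ⟨Φ, hΦ0, hΦ1, -⟩ := hX.exists_deformation (.const Unit y)
  exact ⟨Φ (1, ()), hΦ1 (), ⟨⟨⟨fun t => Φ (t, ()), by fun_prop⟩, hΦ0 (), rfl⟩⟩⟩

theorem joined_of_joined_coe (hX : CompactsDeformInto X) {x₁ x₂ : X}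
    (h : Joined (x₁ : Y) x₂) : Joined x₁ x₂ := by
  obtain ⟨p⟩ := h
  obtain ⟨G, hG⟩ :=
    hX.exists_homotopicRel_comp ⟨stretch 1, by fun_prop⟩ ⟨plateau, by fun_prop⟩
    isCollarCollapse_stretch_one_plateau p.toContinuousMap (by rintro _ (rfl | rfl) <;> simp)
  refine ⟨⟨G, Subtype.ext ?_, Subtype.ext ?_⟩⟩
  · simpa using (hG.fst_eq_snd (x := 0) (Or.inl rfl)).symm
  · simpa using (hG.fst_eq_snd (x := 1) (Or.inr rfl)).symm

variable {N : Type*} [Fintype N]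

theorem exists_genLoopInduced_homotopic (hX : CompactsDeformInto X) {x : X} (f : Ω^ N Y x) :
    ∃ g : Ω^ N X x,
      GenLoop.Homotopic (genLoopInduced ⟨Subtype.val, continuous_subtype_val⟩ g) f := by
  obtain ⟨G, hG⟩ := hX.exists_homotopicRel_comp (Cube.stretch 1)
    ⟨fun y => ∏ i, plateau (y i), by fun_prop⟩
    Cube.isCollarCollapse_stretch_one_plateau f.1 fun y hy => (GenLoop.boundary f y hy).symm ▸ x.2
  have hGx y (hy : y ∈ Cube.boundary N) : G y = x := Subtype.ext <|
    (hG.fst_eq_snd hy).symm.trans (GenLoop.boundary f _ (Cube.stretch_mem_boundary 1 hy))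
  exact ⟨⟨G, hGx⟩, hG.symm.trans (GenLoop.homotopicRel_comp_stretch f).symm⟩

theorem genLoop_homotopic_of_homotopic_genLoopInduced (hX : CompactsDeformInto X) {x : X}
    {g₀ g₁ : Ω^ N X x}
    (h : GenLoop.Homotopic (genLoopInduced ⟨Subtype.val, continuous_subtype_val⟩ g₀)
      (genLoopInduced ⟨Subtype.val, continuous_subtype_val⟩ g₁)) :
    GenLoop.Homotopic g₀ g₁ := by
  obtain ⟨H⟩ := h
  obtain ⟨G, hG⟩ := hX.exists_homotopicRel_comp
    ⟨Prod.map (stretch 1) (Cube.stretch 1), by fun_prop⟩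
    ⟨fun z => plateau z.1 * ∏ i, plateau (z.2 i), by fun_prop⟩
    (isCollarCollapse_stretch_one_plateau.prod Cube.isCollarCollapse_stretch_one_plateau)
    H.toContinuousMap (by
      rintro ⟨t, y⟩ ((rfl | rfl) | hy)
      · exact (H.apply_zero y).symm ▸ (g₀ y).2
      · exact (H.apply_one y).symm ▸ (g₁ y).2
      · exact (H.eq_fst t hy).symm ▸ (g₀ y).2)
  have hG' : (g₀.1.comp (Cube.stretch 1)).HomotopyRel (g₁.1.comp (Cube.stretch 1))
      (Cube.boundary N) :=
    { toContinuousMap := G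
      map_zero_left y := Subtype.ext (by
        simpa using (hG.fst_eq_snd (x := (0, y)) (Or.inl (Or.inl rfl))).symm)
      map_one_left y := Subtype.ext (by
        simpa using (hG.fst_eq_snd (x := (1, y)) (Or.inl (Or.inr rfl))).symm)
      prop' t y hy := Subtype.ext <| (hG.fst_eq_snd (x := (t, y)) (Or.inr hy)).symm.trans
        (H.eq_fst _ (Cube.stretch_mem_boundary 1 hy)) }
  exact ((GenLoop.homotopicRel_comp_stretch g₀).trans ⟨hG'⟩).trans
    (GenLoop.homotopicRel_comp_stretch g₁).symm

theorem zerothHomotopyInduced_injective (hX : CompactsDeformInto X) :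
    Function.Injective (zerothHomotopyInduced X) := by
  rintro ⟨x₁⟩ ⟨x₂⟩ h
  exact Quotient.sound (hX.joined_of_joined_coe (Quotient.exact h))

theorem zerothHomotopyInduced_surjective (hX : CompactsDeformInto X) :
    Function.Surjective (zerothHomotopyInduced X) := by
  rintro ⟨y⟩
  obtain ⟨x, hx, h⟩ := hX.exists_mem_joined y
  exact ⟨⟦⟨x, hx⟩⟧, Quotient.sound h.symm⟩

theorem homotopyGroupInduced_injective (hX : CompactsDeformInto X) (n : ℕ) (x : X) :
    Function.Injective (homotopyGroupInduced X n x) := by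
  rintro ⟨g₀⟩ ⟨g₁⟩ h
  exact Quotient.sound (hX.genLoop_homotopic_of_homotopic_genLoopInduced (Quotient.exact h))

theorem homotopyGroupInduced_surjective (hX : CompactsDeformInto X) (n : ℕ) (x : X) :
    Function.Surjective (homotopyGroupInduced X n x) := by
  rintro ⟨f⟩
  obtain ⟨g, hg⟩ := hX.exists_genLoopInduced_homotopic f
  exact ⟨⟦g⟧, Quotient.sound hg⟩

end CompactsDeformInto

/-- Suppose for every compact K ⊆ Y there is a homotopy φ_K : K × [0,1] → Y starting at the
inclusion, ending in X, and staying in X on K ∩ X. Then the inclusion X → Y is a weak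
homotopy equivalence: it induces a bijection on path components and, for every base point
x ∈ X and every n ≥ 1, a group isomorphism π_n(X, x) → π_n(Y, x). -/
theorem stmt6 {Y : Type*} [TopologicalSpace Y] (X : Set Y)
    (hyp : ∀ K : Set Y, IsCompact K → ∃ φ : C(K × unitInterval, Y),
      (∀ p : K, φ (p, 0) = (p : Y)) ∧ (∀ p : K, φ (p, 1) ∈ X) ∧
      (∀ p : K, (p : Y) ∈ X → ∀ t : unitInterval, φ (p, t) ∈ X)) :
    Function.Bijective (zerothHomotopyInduced X) ∧
    ∀ (x : X) (n : ℕ) (hn : 1 ≤ n),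
      haveI : Nonempty (Fin n) := ⟨⟨0, hn⟩⟩
      Function.Bijective (homotopyGroupInduced X n x) ∧
      ∀ a b : HomotopyGroup (Fin n) X x,
        homotopyGroupInduced X n x (a * b) =
          homotopyGroupInduced X n x a * homotopyGroupInduced X n x b := by
  have hX : CompactsDeformInto X := hyp
  refine ⟨⟨hX.zerothHomotopyInduced_injective, hX.zerothHomotopyInduced_surjective⟩,
    fun x n hn => ?_⟩
  have : Nonempty (Fin n) := ⟨⟨0, hn⟩⟩
  exact ⟨⟨hX.homotopyGroupInduced_injective n x, hX.homotopyGroupInduced_surjective n x⟩,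
    homotopyGroupInduced_mul X n x⟩
end
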